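/- arXiv:0904.2895 — 4 statements merged into one kernel-verified Lean document; each statement's English description precedes it below -/
import Mathlib

section
/- For a nonzero complex number q that is not a root of unity, and nonzero complex numbers a, a', the union S(ℓ,a) ∪ S(ℓ',a') of two q-strings is itself a q-string of length strictly greater than max{ℓ, ℓ'} (i.e., the q-strings are adjacent) if and only if a⁻¹a' = q^i or a⁻¹a' = q^{-i} for some i ∈ {|ℓ-ℓ'|+2, |ℓ-ℓ'|+4, ..., ℓ+ℓ'}. -/
/-- The q-string S(ℓ,a) = {a·q^{2i-ℓ+1} : 0 ≤ i ≤ ℓ-1} as a set. -/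
noncomputable def qStr (q a : ℂ) (ℓ : ℕ) : Set ℂ :=
  (fun i : ℕ => a * q ^ (2 * (i : ℤ) - ℓ + 1)) '' Set.Iio ℓ

/-- Two q-strings are adjacent if their union is a q-string of length
strictly greater than both of their lengths. -/
def Adjacent (q a a' : ℂ) (ℓ ℓ' : ℕ) : Prop :=
  ∃ ℓ'' a'', 0 < ℓ'' ∧ a'' ≠ 0 ∧ max ℓ ℓ' < ℓ'' ∧
    qStr q a ℓ ∪ qStr q a' ℓ' = qStr q a'' ℓ''

lemma my_zpow_inj {q : ℂ} (hq0 : q ≠ 0) (hq : ∀ n : ℕ, 0 < n → q ^ n ≠ 1) :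
    Function.Injective (fun n : ℤ => q ^ n) := by
  intro m n h
  simp only at h
  by_contra hne
  have h1 : q ^ (m - n) = 1 := by
    rw [zpow_sub₀ hq0, h, div_self (zpow_ne_zero _ hq0)]
  have h2 : q ^ ((m - n).natAbs : ℤ) = 1 := by
    rcases Int.natAbs_eq (m - n) with h2 | h2
    · rw [← h2]; exact h1
    · rw [← neg_neg ((m - n).natAbs : ℤ), ← h2, zpow_neg, h1, inv_one]
  rw [zpow_natCast] at h2
  exact hq (m - n).natAbs (by omega) h2

lemma qStr_eq (q a : ℂ) (hq0 : q ≠ 0) (t : ℤ) (ℓ : ℕ) :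
    qStr q (a * q ^ t) ℓ = (fun n : ℤ => a * q ^ n) ''
      {n : ℤ | t - ℓ + 1 ≤ n ∧ n ≤ t + ℓ - 1 ∧ (n + ℓ + t + 1) % 2 = 0} := by
  ext x
  simp only [qStr, Set.mem_image, Set.mem_Iio, Set.mem_setOf_eq]
  constructor
  · rintro ⟨i, hi, rfl⟩
    refine ⟨t + 2 * i - ℓ + 1, by omega, ?_⟩
    rw [mul_assoc, ← zpow_add₀ hq0]
    ring_nf
  · rintro ⟨n, ⟨h1, h2, h3⟩, rfl⟩
    obtain ⟨i, hi⟩ : ∃ i : ℕ, (i : ℤ) * 2 = n - t + ℓ - 1 := ⟨((n - t + ℓ - 1) / 2).toNat, by omega⟩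
    refine ⟨i, by omega, ?_⟩
    have he : 2 * (i : ℤ) - ℓ + 1 = n - t := by omega
    rw [he, mul_assoc, ← zpow_add₀ hq0, show t + (n - t) = n from by ring]

lemma adjacent_symm {q a a' : ℂ} {ℓ ℓ' : ℕ} (h : Adjacent q a a' ℓ ℓ') :
    Adjacent q a' a ℓ' ℓ := by
  obtain ⟨L, b, h1, h2, h3, h4⟩ := h
  exact ⟨L, b, h1, h2, by omega, by rw [Set.union_comm]; exact h4⟩

lemma adj_of_t (q a : ℂ) (hq0 : q ≠ 0) (ha : a ≠ 0) (ℓ ℓ' : ℕ) (t : ℤ)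
    (hpar : t % 2 = ((ℓ : ℤ) + ℓ') % 2)
    (hlo : ((max ℓ ℓ' - min ℓ ℓ' : ℕ) : ℤ) + 2 ≤ t) (hhi : t ≤ (ℓ : ℤ) + ℓ') :
    Adjacent q a (a * q ^ t) ℓ ℓ' := by
  have hlo' : ((max ℓ ℓ' : ℕ) : ℤ) - ((min ℓ ℓ' : ℕ) : ℤ) + 2 ≤ t := by
    omega
  set L : ℕ := ((t + ℓ + ℓ') / 2).toNat with hLdef
  set s : ℤ := (t + ℓ' - ℓ) / 2 with hsdef
  have hmm : ((max ℓ ℓ' : ℕ) : ℤ) = max (ℓ : ℤ) ℓ' := by push_cast; rfl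
  have hm2 : ((min ℓ ℓ' : ℕ) : ℤ) = min (ℓ : ℤ) ℓ' := by push_cast; rfl
  rw [hmm, hm2] at hlo'
  have hL : (L : ℤ) * 2 = t + ℓ + ℓ' := by
    rw [hLdef]; omega
  have hs : s * 2 = t + ℓ' - ℓ := by rw [hsdef]; omega
  refine ⟨L, a * q ^ s, by omega, mul_ne_zero ha (zpow_ne_zero _ hq0), ?_, ?_⟩
  · have : ((max ℓ ℓ' : ℕ) : ℤ) < L := by rw [hmm]; omega
    exact_mod_cast this
  · nth_rw 1 [show a = a * q ^ (0 : ℤ) from by rw [zpow_zero, mul_one]]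
    rw [qStr_eq q a hq0 0 ℓ, qStr_eq q a hq0 t ℓ', qStr_eq q a hq0 s L, ← Set.image_union]
    apply congrArg (Set.image fun n : ℤ => a * q ^ n)
    ext n
    simp only [Set.mem_union, Set.mem_setOf_eq]
    omega

set_option maxHeartbeats 1600000 in
lemma interval_facts (ℓ ℓ' L : ℕ) (t s : ℤ) (hℓ : 0 < ℓ) (hℓ' : 0 < ℓ') (hmaxL : max ℓ ℓ' < L)
    (hE : ∀ n : ℤ, ((0 - (ℓ : ℤ) + 1 ≤ n ∧ n ≤ 0 + (ℓ : ℤ) - 1 ∧ (n + ℓ + 0 + 1) % 2 = 0) ∨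
                    (t - ℓ' + 1 ≤ n ∧ n ≤ t + ℓ' - 1 ∧ (n + ℓ' + t + 1) % 2 = 0)) ↔
                   (s - L + 1 ≤ n ∧ n ≤ s + L - 1 ∧ (n + L + s + 1) % 2 = 0)) :
    (max ℓ ℓ' - min ℓ ℓ') + 2 ≤ t.natAbs ∧ t.natAbs ≤ ℓ + ℓ' ∧
      t.natAbs % 2 = (ℓ + ℓ') % 2 := by
  have f1 := (hE (1 - ℓ)).mp (Or.inl (by omega))
  have f2 := (hE ((ℓ : ℤ) - 1)).mp (Or.inl (by omega))
  have f3 := (hE (t - ℓ' + 1)).mp (Or.inr (by omega))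
  have f4 := (hE (t + ℓ' - 1)).mp (Or.inr (by omega))
  have f5 := (hE (s - L + 1)).mpr (by omega)
  have f6 := (hE (s + L - 1)).mpr (by omega)
  have hpar : t % 2 = ((ℓ : ℤ) + ℓ') % 2 := by omega
  have hub1 : t ≤ (ℓ : ℤ) + ℓ' := by
    by_contra hgt
    push_neg at hgt
    have h7 := (hE ((ℓ : ℤ) + 1)).mpr ⟨by omega, by omega, by omega⟩
    omega
  have hub2 : -((ℓ : ℤ) + ℓ') ≤ t := by
    by_contra hgt
    push_neg at hgt
    have h8 := (hE (-(ℓ : ℤ) - 1)).mpr ⟨by omega, by omega, by omega⟩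
    omega
  have hlb : t ≤ -(((max ℓ ℓ' - min ℓ ℓ' : ℕ) : ℤ) + 2) ∨
      ((max ℓ ℓ' - min ℓ ℓ' : ℕ) : ℤ) + 2 ≤ t := by omega
  refine ⟨by omega, by omega, by omega⟩

set_option maxHeartbeats 1600000 in
theorem qstring_adjacent_iff (q a a' : ℂ) (ℓ ℓ' : ℕ)
    (hq0 : q ≠ 0) (hq : ∀ n : ℕ, 0 < n → q ^ n ≠ 1)
    (ha : a ≠ 0) (ha' : a' ≠ 0) (hℓ : 0 < ℓ) (hℓ' : 0 < ℓ') :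
    Adjacent q a a' ℓ ℓ' ↔
      ∃ i : ℕ, ((max ℓ ℓ' - min ℓ ℓ') + 2 ≤ i ∧ i ≤ ℓ + ℓ' ∧ i % 2 = (ℓ + ℓ') % 2) ∧
        (a⁻¹ * a' = q ^ (i : ℤ) ∨ a⁻¹ * a' = q ^ (-(i : ℤ))) := by
  constructor
  · rintro ⟨L, b, hL0, hb0, hmax, heq⟩
    have hmem1 : a * q ^ (2 * ((0 : ℕ) : ℤ) - ℓ + 1) ∈ qStr q b L := by
      rw [← heq]; left; exact ⟨0, hℓ, rfl⟩
    obtain ⟨j, hj, hjeq⟩ := hmem1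
    have hmem2 : a' * q ^ (2 * ((0 : ℕ) : ℤ) - ℓ' + 1) ∈ qStr q b L := by
      rw [← heq]; right; exact ⟨0, hℓ', rfl⟩
    obtain ⟨j', hj', hjeq'⟩ := hmem2
    simp only at hjeq hjeq'
    obtain ⟨s, hsdef⟩ : ∃ s : ℤ, s = (2 * ((0 : ℕ) : ℤ) - ℓ + 1) - (2 * (j : ℤ) - L + 1) :=
      ⟨_, rfl⟩
    obtain ⟨t, htdef⟩ : ∃ t : ℤ,
        t = s + ((2 * (j' : ℤ) - L + 1) - (2 * ((0 : ℕ) : ℤ) - ℓ' + 1)) := ⟨_, rfl⟩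
    have hbs : b = a * q ^ s := by
      rw [eq_comm, hsdef]
      calc a * q ^ ((2 * ((0 : ℕ) : ℤ) - ℓ + 1) - (2 * (j : ℤ) - L + 1))
          = a * q ^ (2 * ((0 : ℕ) : ℤ) - ℓ + 1) / q ^ (2 * (j : ℤ) - L + 1) := by
            rw [zpow_sub₀ hq0, mul_div_assoc]
        _ = b * q ^ (2 * (j : ℤ) - L + 1) / q ^ (2 * (j : ℤ) - L + 1) := by rw [hjeq]
        _ = b := mul_div_cancel_right₀ _ (zpow_ne_zero _ hq0)
    have ha'2 : a' = a * q ^ t := by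
      rw [eq_comm, htdef]
      calc a * q ^ (s + ((2 * (j' : ℤ) - L + 1) - (2 * ((0 : ℕ) : ℤ) - ℓ' + 1)))
          = a * q ^ s * q ^ ((2 * (j' : ℤ) - L + 1) - (2 * ((0 : ℕ) : ℤ) - ℓ' + 1)) := by
            rw [zpow_add₀ hq0, mul_assoc]
        _ = b * q ^ (2 * (j' : ℤ) - L + 1) / q ^ (2 * ((0 : ℕ) : ℤ) - ℓ' + 1) := by
            rw [← hbs, zpow_sub₀ hq0, mul_div_assoc]
        _ = a' * q ^ (2 * ((0 : ℕ) : ℤ) - ℓ' + 1) / q ^ (2 * ((0 : ℕ) : ℤ) - ℓ' + 1) := by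
            rw [hjeq']
        _ = a' := mul_div_cancel_right₀ _ (zpow_ne_zero _ hq0)
    have hinj : Function.Injective (fun n : ℤ => a * q ^ n) := by
      intro m n h
      exact my_zpow_inj hq0 hq (mul_left_cancel₀ ha h)
    rw [hbs, ha'2] at heq
    nth_rw 1 [show a = a * q ^ (0 : ℤ) from by rw [zpow_zero, mul_one]] at heq
    rw [qStr_eq q a hq0 0 ℓ, qStr_eq q a hq0 t ℓ', qStr_eq q a hq0 s L,
      ← Set.image_union] at heq
    have hE := Set.ext_iff.mp (Set.image_injective.mpr hinj heq)
    simp only [Set.mem_union, Set.mem_setOf_eq] at hE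
    have hq' : a⁻¹ * a' = q ^ t := by
      rw [ha'2, ← mul_assoc, inv_mul_cancel₀ ha, one_mul]
    have harith := interval_facts ℓ ℓ' L t s hℓ hℓ' hmax hE
    refine ⟨t.natAbs, harith, ?_⟩
    rcases le_or_gt 0 t with hc | hc
    · left; rw [Int.natAbs_of_nonneg hc]; exact hq'
    · right; rw [show -((t.natAbs : ℤ)) = t from by omega]; exact hq'
  · rintro ⟨i, ⟨h1, h2, h3⟩, hc | hc⟩
    · have ht : a' = a * q ^ (i : ℤ) := by
        rw [← hc, ← mul_assoc, mul_inv_cancel₀ ha, one_mul]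
      rw [ht]
      exact adj_of_t q a hq0 ha ℓ ℓ' (i : ℤ) (by omega) (by omega) (by omega)
    · have ha2 : a' = a * q ^ (-(i : ℤ)) := by
        rw [← hc, ← mul_assoc, mul_inv_cancel₀ ha, one_mul]
      have ht : a = a' * q ^ (i : ℤ) := by
        rw [ha2, mul_assoc, ← zpow_add₀ hq0, show -(i : ℤ) + i = 0 from by ring,
          zpow_zero, mul_one]
      have h := adj_of_t q a' hq0 ha' ℓ' ℓ (i : ℤ) (by omega) (by omega) (by omega)
      rw [ht]
      exact adjacent_symm h
end

section
/- Let q ∈ ℂ be nonzero and not a root of unity, and let Ω be a finite multiset of nonzero complex numbers. Then there exists a multiset {S(ℓ_i, a_i)}_{i=1}^n of q-strings in general position such that Ω equals the multiset union ⋃_{i=1}^n S(ℓ_i, a_i), and this multiset of q-strings is uniquely determined by Ω. -/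
/-- The q-string S(ℓ,a) = {a·q^{2i-ℓ+1} : 0 ≤ i ≤ ℓ-1} as a multiset. -/
noncomputable def qMS (q a : ℂ) (ℓ : ℕ) : Multiset ℂ :=
  (Multiset.range ℓ).map (fun i : ℕ => a * q ^ (2 * (i : ℤ) - ℓ + 1))

/-- A multiset of q-strings (given by parameters (ℓᵢ, aᵢ)) is in general
position if every pair of distinct members (with multiplicity) is not adjacent. -/
def InGeneralPosition (q : ℂ) (P : Multiset (ℕ × ℂ)) : Prop :=
  ∃ L : List (ℕ × ℂ), P = ↑L ∧
    L.Pairwise (fun p p' => ¬ Adjacent q p.2 p'.2 p.1 p'.1)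


namespace QAux

variable {q : ℂ}

lemma zpow_inj (hq0 : q ≠ 0) (hq : ∀ n : ℕ, 0 < n → q ^ n ≠ 1) {m n : ℤ}
    (h : q ^ m = q ^ n) : m = n := by
  by_contra hne
  wlog hlt : m < n generalizing m n
  · exact this h.symm (Ne.symm hne) (by omega)
  have h1 : q ^ (n - m) = 1 := by
    have h' : q ^ (n - m) = q ^ n / q ^ m := zpow_sub₀ hq0 n m
    rw [h, div_self (zpow_ne_zero _ hq0)] at h'
    exact h'
  have h2 : (0:ℕ) < (n - m).toNat := by omega
  have h3 : q ^ ((n - m).toNat) = 1 := by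
    rw [← zpow_natCast, Int.toNat_of_nonneg (by omega)]
    exact h1
  exact hq _ h2 h3

noncomputable def iStr (q b : ℂ) (s : ℤ) (ℓ : ℕ) : Set ℂ :=
  (fun j : ℤ => b * q ^ (2 * j)) '' Set.Ico s (s + ℓ)

lemma mem_iStr {b x : ℂ} {s : ℤ} {ℓ : ℕ} :
    x ∈ iStr q b s ℓ ↔ ∃ j : ℤ, s ≤ j ∧ j < s + ℓ ∧ x = b * q ^ (2 * j) := by
  simp only [iStr, Set.mem_image, Set.mem_Ico]
  constructor
  · rintro ⟨j, ⟨h1, h2⟩, rfl⟩; exact ⟨j, h1, h2, rfl⟩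
  · rintro ⟨j, h1, h2, rfl⟩; exact ⟨j, ⟨h1, h2⟩, rfl⟩

lemma iStr_rebase (hq0 : q ≠ 0) (b : ℂ) (u s : ℤ) (ℓ : ℕ) :
    iStr q (b * q ^ (2 * u)) s ℓ = iStr q b (s + u) ℓ := by
  ext x
  simp only [mem_iStr]
  constructor
  · rintro ⟨j, h1, h2, rfl⟩
    exact ⟨j + u, by omega, by omega, by rw [mul_assoc, ← zpow_add₀ hq0]; ring_nf⟩
  · rintro ⟨j, h1, h2, rfl⟩
    exact ⟨j - u, by omega, by omega, by rw [mul_assoc, ← zpow_add₀ hq0]; ring_nf⟩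

lemma self_mem_iStr (hq0 : q ≠ 0) {b : ℂ} {s : ℤ} {ℓ : ℕ} (hs : s ≤ 0) (hs2 : 0 < s + ℓ) :
    b ∈ iStr q b s ℓ :=
  mem_iStr.2 ⟨0, hs, by omega, by simp⟩

lemma iStr_subset_of {b : ℂ} {s s' : ℤ} {ℓ ℓ' : ℕ} (h1 : s' ≤ s) (h2 : s + ℓ ≤ s' + ℓ') :
    iStr q b s ℓ ⊆ iStr q b s' ℓ' := by
  intro x hx
  obtain ⟨j, hj1, hj2, rfl⟩ := mem_iStr.1 hx
  exact mem_iStr.2 ⟨j, by omega, by omega, rfl⟩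

lemma exp_inj (hq0 : q ≠ 0) (hq : ∀ n : ℕ, 0 < n → q ^ n ≠ 1) {b : ℂ} (hb : b ≠ 0)
    {i j : ℤ} (h : b * q ^ (2 * i) = b * q ^ (2 * j)) : i = j := by
  have := zpow_inj hq0 hq (mul_left_cancel₀ hb h)
  omega

lemma iStr_subset_iff (hq0 : q ≠ 0) (hq : ∀ n : ℕ, 0 < n → q ^ n ≠ 1) {b : ℂ} (hb : b ≠ 0)
    {s s' : ℤ} {ℓ ℓ' : ℕ} (hℓ : 0 < ℓ) :
    iStr q b s ℓ ⊆ iStr q b s' ℓ' ↔ s' ≤ s ∧ s + ℓ ≤ s' + ℓ' := by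
  constructor
  · intro h
    have h1 : b * q ^ (2 * s) ∈ iStr q b s' ℓ' := h (mem_iStr.2 ⟨s, le_refl _, by omega, rfl⟩)
    have h2 : b * q ^ (2 * (s + ℓ - 1)) ∈ iStr q b s' ℓ' :=
      h (mem_iStr.2 ⟨s + ℓ - 1, by omega, by omega, rfl⟩)
    obtain ⟨j1, hj1, hj1', he1⟩ := mem_iStr.1 h1
    obtain ⟨j2, hj2, hj2', he2⟩ := mem_iStr.1 h2
    have e1 := exp_inj hq0 hq hb he1
    have e2 := exp_inj hq0 hq hb he2
    omega
  · rintro ⟨h1, h2⟩; exact iStr_subset_of h1 h2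

lemma iStr_union {b : ℂ} {s s' : ℤ} {ℓ ℓ' : ℕ} (h1 : s' ≤ s + ℓ) (h2 : s ≤ s' + ℓ') :
    iStr q b s ℓ ∪ iStr q b s' ℓ' =
      iStr q b (min s s') ((max (s + ℓ) (s' + ℓ')) - min s s').toNat := by
  ext x
  simp only [Set.mem_union, mem_iStr]
  constructor
  · rintro (⟨j, hj1, hj2, rfl⟩ | ⟨j, hj1, hj2, rfl⟩) <;> exact ⟨j, by omega, by omega, rfl⟩
  · rintro ⟨j, hj1, hj2, rfl⟩
    by_cases hc : s ≤ j ∧ j < s + ℓ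
    · exact Or.inl ⟨j, hc.1, hc.2, rfl⟩
    · exact Or.inr ⟨j, by omega, by omega, rfl⟩

lemma qStr_eq_iStr (hq0 : q ≠ 0) (a : ℂ) (ℓ : ℕ) :
    qStr q a ℓ = iStr q (a * q ^ (1 - (ℓ:ℤ))) 0 ℓ := by
  ext x
  simp only [qStr, Set.mem_image, Set.mem_Iio, mem_iStr]
  constructor
  · rintro ⟨i, hi, rfl⟩
    exact ⟨i, by omega, by omega, by rw [mul_assoc, ← zpow_add₀ hq0]; ring_nf⟩
  · rintro ⟨j, hj1, hj2, rfl⟩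
    refine ⟨j.toNat, by omega, ?_⟩
    rw [mul_assoc, ← zpow_add₀ hq0]
    have he : (1 - (ℓ:ℤ)) + 2 * j = 2 * (j.toNat : ℤ) - ℓ + 1 := by omega
    rw [he]

lemma iStr_eq_qStr (hq0 : q ≠ 0) (b : ℂ) (s : ℤ) (ℓ : ℕ) :
    iStr q b s ℓ = qStr q (b * q ^ (2 * s + ℓ - 1)) ℓ := by
  rw [qStr_eq_iStr hq0, mul_assoc, ← zpow_add₀ hq0]
  have h1 : 2 * s + ↑ℓ - 1 + (1 - (ℓ:ℤ)) = 2 * s := by ring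
  rw [h1, iStr_rebase hq0]
  norm_num

lemma mem_qMS {a x : ℂ} {ℓ : ℕ} :
    x ∈ qMS q a ℓ ↔ x ∈ qStr q a ℓ := by
  simp only [qMS, Multiset.mem_map, Multiset.mem_range, qStr, Set.mem_image, Set.mem_Iio]

lemma qMS_nodup (hq0 : q ≠ 0) (hq : ∀ n : ℕ, 0 < n → q ^ n ≠ 1) {a : ℂ} (ha : a ≠ 0)
    {ℓ : ℕ} : (qMS q a ℓ).Nodup := by
  refine Multiset.Nodup.map_on ?_ (Multiset.nodup_range ℓ)
  intro i _ j _ h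
  have := zpow_inj hq0 hq (mul_left_cancel₀ ha h)
  omega

lemma qStr_nonempty (hq0 : q ≠ 0) {a : ℂ} {ℓ : ℕ} (hℓ : 0 < ℓ) :
    a * q ^ (1 - (ℓ:ℤ)) ∈ qStr q a ℓ := by
  rw [qStr_eq_iStr hq0]
  exact self_mem_iStr hq0 (le_refl _) (by omega)

lemma qStr_inj (hq0 : q ≠ 0) (hq : ∀ n : ℕ, 0 < n → q ^ n ≠ 1) {a a' : ℂ} {ℓ ℓ' : ℕ}
    (ha : a ≠ 0) (ha' : a' ≠ 0) (hℓ : 0 < ℓ) (hℓ' : 0 < ℓ')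
    (h : qStr q a ℓ = qStr q a' ℓ') : ℓ = ℓ' ∧ a = a' := by
  set b := a * q ^ (1 - (ℓ:ℤ)) with hb
  set b' := a' * q ^ (1 - (ℓ':ℤ)) with hb'
  have hbne : b ≠ 0 := mul_ne_zero ha (zpow_ne_zero _ hq0)
  have hb'ne : b' ≠ 0 := mul_ne_zero ha' (zpow_ne_zero _ hq0)
  rw [qStr_eq_iStr hq0, qStr_eq_iStr hq0] at h
  have hmem : b' ∈ iStr q b 0 ℓ := by
    rw [h]; exact self_mem_iStr hq0 (le_refl _) (by omega)
  obtain ⟨j, hj1, hj2, hbe⟩ := mem_iStr.1 hmem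
  have h2 : iStr q b' 0 ℓ' = iStr q b j ℓ' := by
    rw [hbe, iStr_rebase hq0, zero_add]
  rw [h2] at h
  have hs1 := (iStr_subset_iff hq0 hq hbne hℓ).1 h.le
  have hs2 := (iStr_subset_iff hq0 hq hbne hℓ').1 h.ge
  have hj0 : j = 0 := by omega
  have hℓe : ℓ = ℓ' := by omega
  refine ⟨hℓe, ?_⟩
  have hbb : b = b' := by rw [hbe, hj0]; simp
  have : a * q ^ (1 - (ℓ:ℤ)) = a' * q ^ (1 - (ℓ:ℤ)) := by
    rw [hb] at hbb; rw [hbb, hb', hℓe]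
  exact mul_right_cancel₀ (zpow_ne_zero _ hq0) this

end QAux

namespace QAux
variable {q : ℂ}

lemma exists_max_string (hq0 : q ≠ 0) (hq : ∀ n : ℕ, 0 < n → q ^ n ≠ 1)
    (Supp : Finset ℂ) (x₀ : ℂ) (hx₀ : x₀ ∈ Supp) (hx0 : x₀ ≠ 0) :
    ∃ (s : ℤ) (ℓM : ℕ), 0 < ℓM ∧ x₀ ∈ iStr q x₀ s ℓM ∧
      (∀ x ∈ iStr q x₀ s ℓM, x ∈ Supp) ∧
      ∀ (c : ℂ) (u : ℤ) (m : ℕ), c ≠ 0 → 0 < m →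
        (∀ x ∈ iStr q c u m, x ∈ Supp) →
        (iStr q c u m ∩ iStr q x₀ s ℓM).Nonempty →
        iStr q c u m ⊆ iStr q x₀ s ℓM := by
  classical
  set B := Supp.card with hB
  set Pr : ℕ → Prop := fun m => ∀ j : ℕ, j ≤ m → x₀ * q ^ (2 * (j:ℤ)) ∈ Supp with hPr
  set Pl : ℕ → Prop := fun m => ∀ j : ℕ, j ≤ m → x₀ * q ^ (2 * (-(j:ℤ))) ∈ Supp with hPl
  have hbr : ∀ m : ℕ, Pr m → m < B := by
    intro m hm
    have hc : (Finset.range (m+1)).card ≤ B := by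
      refine Finset.card_le_card_of_injOn (fun j : ℕ => x₀ * q ^ (2 * (j:ℤ))) ?_ ?_
      · intro j hj
        exact hm j (by simpa using Nat.lt_succ_iff.1 (Finset.mem_range.1 hj))
      · intro i _ j _ h
        have := exp_inj hq0 hq hx0 h
        omega
    simpa using hc
  have hbl : ∀ m : ℕ, Pl m → m < B := by
    intro m hm
    have hc : (Finset.range (m+1)).card ≤ B := by
      refine Finset.card_le_card_of_injOn (fun j : ℕ => x₀ * q ^ (2 * (-(j:ℤ)))) ?_ ?_
      · intro j hj
        exact hm j (by simpa using Nat.lt_succ_iff.1 (Finset.mem_range.1 hj))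
      · intro i _ j _ h
        have := exp_inj hq0 hq hx0 h
        omega
    simpa using hc
  have hPr0 : Pr 0 := by
    intro j hj
    have : j = 0 := by omega
    subst this; simpa using hx₀
  have hPl0 : Pl 0 := by
    intro j hj
    have : j = 0 := by omega
    subst this; simpa using hx₀
  set R := Nat.findGreatest Pr B with hR
  set L := Nat.findGreatest Pl B with hL
  have hPrR : Pr R := Nat.findGreatest_spec (Nat.zero_le B) hPr0
  have hPlL : Pl L := Nat.findGreatest_spec (Nat.zero_le B) hPl0
  have hRmax : ∀ m, Pr m → m ≤ R := by
    intro m hm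
    by_contra hgt
    exact Nat.findGreatest_is_greatest (by omega) (le_of_lt (hbr m hm)) hm
  have hLmax : ∀ m, Pl m → m ≤ L := by
    intro m hm
    by_contra hgt
    exact Nat.findGreatest_is_greatest (by omega) (le_of_lt (hbl m hm)) hm
  have hMS : ∀ x ∈ iStr q x₀ (-(L:ℤ)) (L + R + 1), x ∈ Supp := by
    intro x hx
    obtain ⟨j, hj1, hj2, rfl⟩ := mem_iStr.1 hx
    rcases le_or_gt 0 j with hj | hj
    · have h := hPrR j.toNat (by omega)
      have : ((j.toNat : ℤ)) = j := by omega
      rwa [this] at h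
    · have h := hPlL (-j).toNat (by omega)
      have : (-(((-j).toNat : ℤ))) = j := by omega
      rwa [this] at h
  refine ⟨-(L:ℤ), L + R + 1, by omega, ?_, hMS, ?_⟩
  · exact mem_iStr.2 ⟨0, by omega, by omega, by simp⟩
  · intro c u m hc hm hsub ⟨z, hzT, hzM⟩
    obtain ⟨w, hw1, hw2, hzw⟩ := mem_iStr.1 hzT
    obtain ⟨v, hv1, hv2, hzv⟩ := mem_iStr.1 hzM
    have hcw : c * q ^ (2 * w) = x₀ * q ^ (2 * v) := hzw.symm.trans hzv
    have hcb : c = x₀ * q ^ (2 * (v - w)) := by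
      have h1 : c = x₀ * q ^ (2 * v) / q ^ (2 * w) :=
        (eq_div_iff (zpow_ne_zero _ hq0)).2 hcw
      rw [h1, mul_div_assoc, ← zpow_sub₀ hq0]
      congr 1
      ring
    have hTeq : iStr q c u m = iStr q x₀ (u + (v - w)) m := by
      rw [hcb, iStr_rebase hq0]
    set u' := u + (v - w) with hu'
    have hup : u' + m ≤ R + 1 := by
      by_contra hgt
      push_neg at hgt
      have hPre : Pr (u' + m - 1).toNat := by
        intro j hj
        by_cases hjR : (j:ℤ) ≤ R
        · exact hMS _ (mem_iStr.2 ⟨(j:ℤ), by omega, by omega, rfl⟩)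
        · have hmem : x₀ * q ^ (2 * (j:ℤ)) ∈ iStr q c u m := by
            rw [hTeq]
            exact mem_iStr.2 ⟨(j:ℤ), by omega, by omega, rfl⟩
          exact hsub _ hmem
      have := hRmax _ hPre
      omega
    have hlow : -(L:ℤ) ≤ u' := by
      by_contra hgt
      push_neg at hgt
      have hPlf : Pl (-u').toNat := by
        intro j hj
        by_cases hjL : (j:ℤ) ≤ L
        · exact hMS _ (mem_iStr.2 ⟨-(j:ℤ), by omega, by omega, rfl⟩)
        · have hmem : x₀ * q ^ (2 * (-(j:ℤ))) ∈ iStr q c u m := by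
            rw [hTeq]
            exact mem_iStr.2 ⟨-(j:ℤ), by omega, by omega, rfl⟩
          exact hsub _ hmem
      have := hLmax _ hPlf
      omega
    rw [hTeq]
    exact iStr_subset_of (by omega) (by omega)

end QAux

namespace QAux
variable {q : ℂ}

lemma adjacent_symm {a a' : ℂ} {ℓ ℓ' : ℕ} (h : Adjacent q a a' ℓ ℓ') :
    Adjacent q a' a ℓ' ℓ := by
  obtain ⟨ℓ'', a'', h1, h2, h3, h4⟩ := h
  exact ⟨ℓ'', a'', h1, h2, by omega, by rw [Set.union_comm]; exact h4⟩

lemma igp_zero : InGeneralPosition q 0 := ⟨[], rfl, List.Pairwise.nil⟩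

lemma igp_cons {P : Multiset (ℕ × ℂ)} {p : ℕ × ℂ}
    (h : ∀ p' ∈ P, ¬ Adjacent q p.2 p'.2 p.1 p'.1) (hP : InGeneralPosition q P) :
    InGeneralPosition q (p ::ₘ P) := by
  obtain ⟨l, rfl, hl⟩ := hP
  exact ⟨p :: l, by simp, List.Pairwise.cons (fun p' hp' => h p' (by simpa using hp')) hl⟩

lemma igp_of_le {P P' : Multiset (ℕ × ℂ)} (h : P' ≤ P) (hP : InGeneralPosition q P) :
    InGeneralPosition q P' := by
  obtain ⟨l, rfl, hl⟩ := hP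
  obtain ⟨l', rfl⟩ : ∃ l' : List (ℕ × ℂ), P' = ↑l' := ⟨P'.toList, by simp⟩
  obtain ⟨l'', hperm, hsub⟩ := Multiset.coe_le.1 h
  have hsym : Symmetric (fun p p' : ℕ × ℂ => ¬ Adjacent q p.2 p'.2 p.1 p'.1) :=
    fun a b hab hadj => hab (adjacent_symm hadj)
  exact ⟨l', rfl, (hperm.pairwise_iff (fun {x y} hxy hadj => hxy (adjacent_symm hadj))).1
    (hl.sublist hsub)⟩

lemma igp_erase {P : Multiset (ℕ × ℂ)} {p : ℕ × ℂ} [DecidableEq (ℕ × ℂ)]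
    (hP : InGeneralPosition q P) :
    InGeneralPosition q (P.erase p) :=
  igp_of_le (Multiset.erase_le p P) hP

lemma igp_forall {P : Multiset (ℕ × ℂ)} {p p' : ℕ × ℂ} (hP : InGeneralPosition q P)
    (h1 : p ∈ P) (h2 : p' ∈ P) (hne : p ≠ p') :
    ¬ Adjacent q p.2 p'.2 p.1 p'.1 := by
  obtain ⟨l, rfl, hl⟩ := hP
  have hsym : Symmetric (fun p p' : ℕ × ℂ => ¬ Adjacent q p.2 p'.2 p.1 p'.1) :=
    fun a b hab h => hab (adjacent_symm h)
  haveI : Std.Symm (fun p p' : ℕ × ℂ => ¬ Adjacent q p.2 p'.2 p.1 p'.1) := ⟨hsym⟩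
  exact hl.forall (by simpa using h1) (by simpa using h2) hne

lemma mem_msum {s : Multiset (Multiset ℂ)} {a : ℂ} : a ∈ s.sum ↔ ∃ t ∈ s, a ∈ t := by
  induction s using Multiset.induction with
  | empty => simp
  | cons x s ih => simp [ih]

lemma nodup_le {s t : Multiset ℂ} (h : s.Nodup) (h2 : ∀ x ∈ s, x ∈ t) : s ≤ t :=
  Multiset.le_iff_count.2 fun a => by
    by_cases ha : a ∈ s
    · calc Multiset.count a s ≤ 1 := Multiset.nodup_iff_count_le_one.1 h a
        _ ≤ Multiset.count a t := Multiset.one_le_count_iff_mem.2 (h2 a ha)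
    · simp [Multiset.count_eq_zero_of_notMem ha]

lemma base_shift (hq0 : q ≠ 0) {c x : ℂ} {w v : ℤ} (h : c * q ^ (2*w) = x * q ^ (2*v)) :
    c = x * q ^ (2 * (v - w)) := by
  have h1 : c = x * q ^ (2 * v) / q ^ (2 * w) := (eq_div_iff (zpow_ne_zero _ hq0)).2 h
  rw [h1, mul_div_assoc, ← zpow_sub₀ hq0]
  congr 1
  ring

/-- Any valid decomposition of `Ω` must contain the maximal string through `x₀`. -/
lemma claimA (hq0 : q ≠ 0) (hq : ∀ n : ℕ, 0 < n → q ^ n ≠ 1)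
    {Ω : Multiset ℂ} {x₀ : ℂ} (hx₀ : x₀ ∈ Ω) (hx0 : x₀ ≠ 0)
    {s : ℤ} {ℓM : ℕ} (hℓM : 0 < ℓM) (hx₀M : x₀ ∈ iStr q x₀ s ℓM)
    (hMS : ∀ x ∈ iStr q x₀ s ℓM, x ∈ Ω)
    (hmax : ∀ (c : ℂ) (u : ℤ) (m : ℕ), c ≠ 0 → 0 < m →
      (∀ x ∈ iStr q c u m, x ∈ Ω) → (iStr q c u m ∩ iStr q x₀ s ℓM).Nonempty →
      iStr q c u m ⊆ iStr q x₀ s ℓM)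
    {P : Multiset (ℕ × ℂ)} (hcond : ∀ p ∈ P, 0 < p.1 ∧ p.2 ≠ 0)
    (hgp : InGeneralPosition q P)
    (hsum : (P.map (fun p => qMS q p.2 p.1)).sum = Ω) :
    (ℓM, x₀ * q ^ (2 * s + ℓM - 1)) ∈ P := by
  classical
  set aM := x₀ * q ^ (2 * s + ℓM - 1) with haM
  have haM0 : aM ≠ 0 := mul_ne_zero hx0 (zpow_ne_zero _ hq0)
  have key0 : ∀ p ∈ P, ∀ x ∈ qMS q p.2 p.1, x ∈ Ω := by
    intro p hp x hx
    have hle : qMS q p.2 p.1 ≤ (P.map (fun p => qMS q p.2 p.1)).sum :=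
      Multiset.le_sum_of_mem (Multiset.mem_map_of_mem (fun p => qMS q p.2 p.1) hp)
    rw [hsum] at hle
    exact Multiset.mem_of_le hle hx
  have hymem : ∀ y ∈ Ω, ∃ p' ∈ P, y ∈ qMS q p'.2 p'.1 := by
    intro y hy
    rw [← hsum] at hy
    obtain ⟨t, ht, hyt⟩ := mem_msum.1 hy
    obtain ⟨p', hp', rfl⟩ := Multiset.mem_map.1 ht
    exact ⟨p', hp', hyt⟩
  set F := P.filter (fun p => x₀ ∈ qMS q p.2 p.1) with hF
  obtain ⟨p0, hp0P, hx₀p0⟩ := hymem x₀ hx₀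
  have hFne : F.toFinset.Nonempty :=
    ⟨p0, Multiset.mem_toFinset.2 (Multiset.mem_filter.2 ⟨hp0P, hx₀p0⟩)⟩
  obtain ⟨p, hpF, hpmax⟩ := F.toFinset.exists_max_image Prod.fst hFne
  have hpF' := Multiset.mem_filter.1 (Multiset.mem_toFinset.1 hpF)
  have hpP : p ∈ P := hpF'.1
  have hx₀p : x₀ ∈ qMS q p.2 p.1 := hpF'.2
  obtain ⟨hpℓ, hpa⟩ := hcond p hpP
  set bp := p.2 * q ^ (1 - (p.1:ℤ)) with hbp
  have hbp0 : bp ≠ 0 := mul_ne_zero hpa (zpow_ne_zero _ hq0)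
  have hpstr : qStr q p.2 p.1 = iStr q bp 0 p.1 := qStr_eq_iStr hq0 _ _
  have hpsub : ∀ x ∈ iStr q bp 0 p.1, x ∈ Ω := by
    intro x hx
    exact key0 p hpP x (mem_qMS.2 (hpstr ▸ hx))
  have hx₀str : x₀ ∈ iStr q bp 0 p.1 := hpstr ▸ mem_qMS.1 hx₀p
  have hsubM : iStr q bp 0 p.1 ⊆ iStr q x₀ s ℓM :=
    hmax bp 0 p.1 hbp0 hpℓ hpsub ⟨x₀, hx₀str, hx₀M⟩
  obtain ⟨v, hv1, hv2, hbv⟩ :=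
    mem_iStr.1 (hsubM (self_mem_iStr hq0 le_rfl (by omega)))
  have hpstr2 : qStr q p.2 p.1 = iStr q x₀ v p.1 := by
    rw [hpstr, hbv, iStr_rebase hq0, zero_add]
  have hsubM2 : iStr q x₀ v p.1 ⊆ iStr q x₀ s ℓM := by
    rw [← hpstr2, hpstr]; exact hsubM
  obtain ⟨hb1, hb2⟩ := (iStr_subset_iff hq0 hq hx0 hpℓ).1 hsubM2
  by_cases heq : v = s ∧ p.1 = ℓM
  · have hqeq : qStr q p.2 p.1 = qStr q aM ℓM := by
      rw [hpstr2, heq.1, ← heq.2, iStr_eq_qStr hq0, haM, heq.2]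
    obtain ⟨h1, h2⟩ := qStr_inj hq0 hq hpa haM0 hpℓ hℓM hqeq
    have hpe : p = (ℓM, aM) := Prod.ext h1 h2
    rwa [← hpe]
  · have hcase : s < v ∨ v + (p.1:ℤ) < s + ℓM := by
      rcases eq_or_lt_of_le hb1 with h | h
      · rcases eq_or_lt_of_le hb2 with h' | h'
        · exact absurd ⟨h.symm, by omega⟩ heq
        · exact Or.inr h'
      · exact Or.inl h
    -- pick the neighbor index e (just outside p's interval, inside M)
    obtain ⟨e, heM1, heM2, henp⟩ :
        ∃ e : ℤ, s ≤ e ∧ e < s + ℓM ∧ (e = v - 1 ∨ e = v + p.1) := by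
      rcases hcase with h | h
      · exact ⟨v - 1, by omega, by omega, by omega⟩
      · exact ⟨v + p.1, by omega, by omega, by omega⟩
    set y := x₀ * q ^ (2 * e) with hy
    have hyM : y ∈ iStr q x₀ s ℓM := mem_iStr.2 ⟨e, heM1, heM2, rfl⟩
    have hyΩ : y ∈ Ω := hMS _ hyM
    obtain ⟨p', hp'P, hyp'⟩ := hymem y hyΩ
    have hynp : y ∉ qStr q p.2 p.1 := by
      rw [hpstr2]
      intro hmem
      obtain ⟨j, hj1, hj2, hyj⟩ := mem_iStr.1 hmem
      have := exp_inj hq0 hq hx0 hyj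
      omega
    have hne : p ≠ p' := by
      intro h
      exact hynp (mem_qMS.1 (h ▸ hyp'))
    have hnadj : ¬ Adjacent q p.2 p'.2 p.1 p'.1 := igp_forall hgp hpP hp'P hne
    obtain ⟨hp'ℓ, hp'a⟩ := hcond p' hp'P
    set bp' := p'.2 * q ^ (1 - (p'.1:ℤ)) with hbp'
    have hp'str : qStr q p'.2 p'.1 = iStr q bp' 0 p'.1 := qStr_eq_iStr hq0 _ _
    have hyp's : y ∈ iStr q bp' 0 p'.1 := hp'str ▸ mem_qMS.1 hyp'
    obtain ⟨w, hw1, hw2, hyw⟩ := mem_iStr.1 hyp's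
    have hbv' : bp' = x₀ * q ^ (2 * (e - w)) := base_shift hq0 (hyw.symm.trans hy ▸ rfl)
    have hp'str2 : qStr q p'.2 p'.1 = iStr q x₀ (e - w) p'.1 := by
      rw [hp'str, hbv', iStr_rebase hq0, zero_add]
    set u' := e - w with hu'
    have hu'b : u' ≤ e ∧ e < u' + p'.1 := by omega
    by_cases hcont : u' ≤ v ∧ v + p.1 ≤ u' + p'.1
    · -- p' strictly contains p : contradicts maximality of p.1
      have hsub2 : iStr q x₀ v p.1 ⊆ iStr q x₀ u' p'.1 :=
        iStr_subset_of hcont.1 hcont.2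
      have hx₀p' : x₀ ∈ qMS q p'.2 p'.1 := by
        rw [mem_qMS, hp'str2]
        exact hsub2 (hpstr2 ▸ mem_qMS.1 hx₀p)
      have hp'F : p' ∈ F.toFinset :=
        Multiset.mem_toFinset.2 (Multiset.mem_filter.2 ⟨hp'P, hx₀p'⟩)
      have hle := hpmax p' hp'F
      -- p'.1 must be strictly bigger than p.1
      omega
    · -- the two strings are adjacent : contradiction
      exfalso
      apply hnadj
      have htouch1 : v ≤ u' + p'.1 := by omega
      have htouch2 : u' ≤ v + p.1 := by omega
      have hun := iStr_union (q := q) (b := x₀) (s := v) (s' := u') (ℓ := p.1) (ℓ' := p'.1)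
        (by omega) (by omega)
      set lo := min v u' with hlo
      set n := ((max (v + p.1) (u' + p'.1)) - lo).toNat with hn
      refine ⟨n, x₀ * q ^ (2 * lo + n - 1), by omega, mul_ne_zero hx0 (zpow_ne_zero _ hq0), by omega, ?_⟩
      rw [hpstr2, hp'str2, hun, iStr_eq_qStr hq0]

end QAux

theorem qstring_decomposition_exists_unique (q : ℂ)
    (hq0 : q ≠ 0) (hq : ∀ n : ℕ, 0 < n → q ^ n ≠ 1)
    (Ω : Multiset ℂ) (hΩ : (0 : ℂ) ∉ Ω) :
    ∃! P : Multiset (ℕ × ℂ),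
      (∀ p ∈ P, 0 < p.1 ∧ p.2 ≠ 0) ∧
      InGeneralPosition q P ∧
      (P.map (fun p => qMS q p.2 p.1)).sum = Ω := by
  classical
  revert hΩ
  induction Ω using Multiset.strongInductionOn with
  | _ Ω IH =>
    intro hΩ
    by_cases h0 : Ω = 0
    · subst h0
      refine ⟨0, ⟨by simp, QAux.igp_zero, by simp⟩, ?_⟩
      rintro P ⟨hcond, hgp, hsum⟩
      by_contra hne
      obtain ⟨p, hp⟩ := Multiset.exists_mem_of_ne_zero hne
      have hpℓ := (hcond p hp).1
      have hx : p.2 * q ^ (2 * ((0:ℕ):ℤ) - p.1 + 1) ∈ qMS q p.2 p.1 :=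
        Multiset.mem_map.2 ⟨0, Multiset.mem_range.2 hpℓ, rfl⟩
      have hmem : p.2 * q ^ (2 * ((0:ℕ):ℤ) - p.1 + 1) ∈
          (P.map (fun p => qMS q p.2 p.1)).sum :=
        QAux.mem_msum.2 ⟨qMS q p.2 p.1, Multiset.mem_map_of_mem _ hp, hx⟩
      rw [hsum] at hmem
      exact Multiset.notMem_zero _ hmem
    · obtain ⟨x₀, hx₀⟩ := Multiset.exists_mem_of_ne_zero h0
      have hx0 : x₀ ≠ 0 := fun h => hΩ (h ▸ hx₀)
      obtain ⟨s, ℓM, hℓM, hx₀M, hMS', hmax'⟩ :=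
        QAux.exists_max_string (q := q) hq0 hq Ω.toFinset x₀ (Multiset.mem_toFinset.2 hx₀) hx0
      have hMS : ∀ x ∈ QAux.iStr q x₀ s ℓM, x ∈ Ω :=
        fun x hx => Multiset.mem_toFinset.1 (hMS' x hx)
      have hmax : ∀ (c : ℂ) (u : ℤ) (m : ℕ), c ≠ 0 → 0 < m →
          (∀ x ∈ QAux.iStr q c u m, x ∈ Ω) →
          (QAux.iStr q c u m ∩ QAux.iStr q x₀ s ℓM).Nonempty →
          QAux.iStr q c u m ⊆ QAux.iStr q x₀ s ℓM :=
        fun c u m hc hm hsub hint =>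
          hmax' c u m hc hm (fun x hx => Multiset.mem_toFinset.2 (hsub x hx)) hint
      set aM := x₀ * q ^ (2 * s + ℓM - 1) with haM
      have haM0 : aM ≠ 0 := mul_ne_zero hx0 (zpow_ne_zero _ hq0)
      have hstrM : qStr q aM ℓM = QAux.iStr q x₀ s ℓM :=
        (QAux.iStr_eq_qStr hq0 x₀ s ℓM).symm
      set Mms := qMS q aM ℓM with hMms
      have hMnodup : Mms.Nodup := QAux.qMS_nodup hq0 hq haM0
      have hMsub : ∀ x ∈ Mms, x ∈ Ω := by
        intro x hx
        apply hMS
        rw [← hstrM]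
        exact QAux.mem_qMS.1 hx
      have hMle : Mms ≤ Ω := QAux.nodup_le hMnodup hMsub
      have hx₀M' : x₀ ∈ Mms := QAux.mem_qMS.2 (by rw [hstrM]; exact hx₀M)
      have hMpos : (0 : Multiset ℂ) < Mms := by
        refine lt_of_le_of_ne (Multiset.zero_le _) ?_
        intro h
        rw [← h] at hx₀M'
        exact Multiset.notMem_zero _ hx₀M'
      have hlt : Ω - Mms < Ω := by
        have he : Mms + (Ω - Mms) = Ω := add_tsub_cancel_of_le hMle
        calc Ω - Mms < Mms + (Ω - Mms) := (lt_add_iff_pos_left _).2 hMpos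
          _ = Ω := he
      have h0' : (0:ℂ) ∉ Ω - Mms := fun h => hΩ (Multiset.mem_of_le tsub_le_self h)
      obtain ⟨P', ⟨hP'cond, hP'gp, hP'sum⟩, hP'uniq⟩ := IH (Ω - Mms) hlt h0'
      have hP'sub : ∀ p' ∈ P', ∀ x ∈ qStr q p'.2 p'.1, x ∈ Ω := by
        intro p' hp' x hx
        have hle : qMS q p'.2 p'.1 ≤ (P'.map (fun p => qMS q p.2 p.1)).sum :=
          Multiset.le_sum_of_mem (Multiset.mem_map_of_mem (fun p => qMS q p.2 p.1) hp')
        rw [hP'sum] at hle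
        exact Multiset.mem_of_le (le_trans hle tsub_le_self) (QAux.mem_qMS.2 hx)
      have hnadj : ∀ p' ∈ P', ¬ Adjacent q aM p'.2 ℓM p'.1 := by
        intro p' hp' hadj
        obtain ⟨ℓ'', a'', hℓ'', ha'', hlt'', huni⟩ := hadj
        obtain ⟨hp'ℓ, hp'a⟩ := hP'cond p' hp'
        have hb'' : a'' * q ^ (1 - (ℓ'':ℤ)) ≠ 0 := mul_ne_zero ha'' (zpow_ne_zero _ hq0)
        have hTi : qStr q a'' ℓ'' = QAux.iStr q (a'' * q ^ (1 - (ℓ'':ℤ))) 0 ℓ'' :=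
          QAux.qStr_eq_iStr hq0 _ _
        have hTsub : ∀ x ∈ QAux.iStr q (a'' * q ^ (1 - (ℓ'':ℤ))) 0 ℓ'', x ∈ Ω := by
          intro x hx
          rw [← hTi, ← huni] at hx
          rcases hx with hx | hx
          · apply hMS; rw [← hstrM]; exact hx
          · exact hP'sub p' hp' x hx
        have hint : (QAux.iStr q (a'' * q ^ (1 - (ℓ'':ℤ))) 0 ℓ'' ∩
            QAux.iStr q x₀ s ℓM).Nonempty := by
          refine ⟨x₀, ?_, hx₀M⟩
          rw [← hTi, ← huni]
          left
          rw [hstrM]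
          exact hx₀M
        have hTM := hmax _ 0 ℓ'' hb'' hℓ'' hTsub hint
        have hMT : QAux.iStr q x₀ s ℓM ⊆ QAux.iStr q (a'' * q ^ (1 - (ℓ'':ℤ))) 0 ℓ'' := by
          rw [← hTi, ← huni]
          intro x hx
          left
          rw [hstrM]
          exact hx
        have hTeq : qStr q a'' ℓ'' = qStr q aM ℓM := by
          rw [hTi, hstrM]
          exact Set.Subset.antisymm hTM hMT
        obtain ⟨h1, h2⟩ := QAux.qStr_inj hq0 hq ha'' haM0 hℓ'' hℓM hTeq
        omega
      refine ⟨(ℓM, aM) ::ₘ P', ⟨?_, ?_, ?_⟩, ?_⟩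
      · intro p hp
        rcases Multiset.mem_cons.1 hp with rfl | hp
        · exact ⟨hℓM, haM0⟩
        · exact hP'cond p hp
      · exact QAux.igp_cons (fun p' hp' => hnadj p' hp') hP'gp
      · rw [Multiset.map_cons, Multiset.sum_cons, hP'sum]
        exact add_tsub_cancel_of_le hMle
      · rintro P ⟨hcond, hgp, hsum⟩
        have hmemP : (ℓM, aM) ∈ P :=
          QAux.claimA hq0 hq hx₀ hx0 hℓM hx₀M hMS hmax hcond hgp hsum
        have hPe : (ℓM, aM) ::ₘ P.erase (ℓM, aM) = P := Multiset.cons_erase hmemP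
        have hsum2 : Mms + ((P.erase (ℓM, aM)).map (fun p => qMS q p.2 p.1)).sum = Ω := by
          have h := hsum
          rw [← hPe, Multiset.map_cons, Multiset.sum_cons] at h
          exact h
        have hQsum : ((P.erase (ℓM, aM)).map (fun p => qMS q p.2 p.1)).sum = Ω - Mms := by
          rw [← hsum2, add_tsub_cancel_left]
        have hQcond : ∀ p ∈ P.erase (ℓM, aM), 0 < p.1 ∧ p.2 ≠ 0 :=
          fun p hp => hcond p (Multiset.mem_of_mem_erase hp)
        have hQgp := QAux.igp_erase (p := (ℓM, aM)) hgp
        have hQeq : P.erase (ℓM, aM) = P' := hP'uniq _ ⟨hQcond, hQgp, hQsum⟩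
        rw [← hPe, hQeq]
end

section
/- Let ℓ₁,...,ℓ_n be positive integers with sum d, and let g(λ) = Π_{i=1}^n (1 + λ + λ² + ... + λ^{ℓ_i}) = Σ_{i=0}^d c_i λ^i. Then the coefficients satisfy c_0 = c_d = 1, c_i = c_{d-i} for all 0 ≤ i ≤ d, and the sequence c_0, c_1, ..., c_{⌊d/2⌋} is nondecreasing (the coefficients are unimodal and symmetric). -/
open Polynomial

/-- Extend the coefficient sequence of a polynomial over `ℕ` to a `ℤ`-indexed sequence. -/
private def ceN (p : Polynomial ℕ) : ℤ → ℕ :=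
  fun k => if 0 ≤ k then p.coeff k.toNat else 0

/-- `c` is symmetric about `d/2` and unimodal (as a `ℤ`-indexed sequence). -/
private def GoodSeq (c : ℤ → ℕ) (d : ℕ) : Prop :=
  (∀ k : ℤ, c k = c ((d : ℤ) - k)) ∧
  (∀ a b : ℤ, a ≤ b → a + b ≤ (d : ℤ) → c a ≤ c b)

private lemma ceN_mul_geom (p : Polynomial ℕ) (ℓ : ℕ) (i : ℤ) :
    ceN (p * ∑ j ∈ Finset.range (ℓ + 1), (X : Polynomial ℕ) ^ j) i
      = ∑ m ∈ Finset.range (ℓ + 1), ceN p (i - m) := by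
  unfold ceN
  rcases le_or_gt 0 i with hi | hi
  · simp only [if_pos hi, Finset.mul_sum, Polynomial.finset_sum_coeff,
      Polynomial.coeff_mul_X_pow']
    refine Finset.sum_congr rfl fun m _ => ?_
    by_cases h : (m : ℤ) ≤ i
    · rw [if_pos (by omega : m ≤ i.toNat), if_pos (by omega : (0:ℤ) ≤ i - m)]
      congr 1
      omega
    · rw [if_neg (by omega : ¬ m ≤ i.toNat), if_neg (by omega : ¬ (0:ℤ) ≤ i - m)]
  · rw [if_neg (not_le.mpr hi)]
    symm
    refine Finset.sum_eq_zero fun m _ => ?_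
    rw [if_neg (by omega : ¬ (0:ℤ) ≤ i - m)]

private lemma good_step (c : ℤ → ℕ) (d ℓ : ℕ) (h : GoodSeq c d) (i : ℤ)
    (hi : 2 * (i + 1) ≤ (d : ℤ) + ℓ) :
    (∑ m ∈ Finset.range (ℓ + 1), c (i - m)) ≤ ∑ m ∈ Finset.range (ℓ + 1), c (i + 1 - m) := by
  have key : (∑ m ∈ Finset.range (ℓ + 1), c (i - m)) + c (i + 1)
      = (∑ m ∈ Finset.range (ℓ + 1), c (i + 1 - m)) + c (i - ℓ) := by
    have h1 := Finset.sum_range_succ (fun m : ℕ => c (i + 1 - m)) (ℓ + 1)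
    have h2 := Finset.sum_range_succ' (fun m : ℕ => c (i + 1 - m)) (ℓ + 1)
    have e1 : ∀ m : ℕ, i + 1 - ((m : ℤ) + 1) = i - m := fun m => by ring
    have e2 : (∑ m ∈ Finset.range (ℓ + 1), c (i + 1 - ((m : ℤ) + 1)))
        = ∑ m ∈ Finset.range (ℓ + 1), c (i - m) :=
      Finset.sum_congr rfl fun m _ => by rw [e1]
    have e3 : i + 1 - ((ℓ : ℤ) + 1) = i - ℓ := by ring
    calc (∑ m ∈ Finset.range (ℓ + 1), c (i - m)) + c (i + 1)
        = (∑ m ∈ Finset.range (ℓ + 1), c (i + 1 - ((m : ℤ) + 1))) + c (i + 1 - (0:ℕ)) := by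
          rw [e2]; norm_num
      _ = ∑ m ∈ Finset.range (ℓ + 1 + 1), c (i + 1 - m) := by
          rw [Finset.sum_range_succ' (fun m : ℕ => c (i + 1 - m)) (ℓ + 1)]
          push_cast
          rfl
      _ = (∑ m ∈ Finset.range (ℓ + 1), c (i + 1 - m)) + c (i + 1 - ((ℓ : ℤ) + 1)) := by
          rw [Finset.sum_range_succ (fun m : ℕ => c (i + 1 - m)) (ℓ + 1)]
          push_cast
          rfl
      _ = (∑ m ∈ Finset.range (ℓ + 1), c (i + 1 - m)) + c (i - ℓ) := by rw [e3]
  have hle : c (i - ℓ) ≤ c (i + 1) := h.2 (i - ℓ) (i + 1) (by omega) (by omega)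
  omega

private lemma steps (c' : ℤ → ℕ) (D : ℕ)
    (hstep : ∀ i : ℤ, 2 * (i + 1) ≤ (D : ℤ) → c' i ≤ c' (i + 1)) :
    ∀ n : ℕ, ∀ a : ℤ, 2 * (a + n) ≤ (D : ℤ) → c' a ≤ c' (a + n) := by
  intro n
  induction n with
  | zero => intro a _; simp
  | succ n ih =>
    intro a ha
    push_cast at ha
    have h1 : c' a ≤ c' (a + n) := ih a (by omega)
    have h2 : c' (a + n) ≤ c' (a + n + 1) := hstep (a + n) (by omega)
    have : a + ((n : ℤ) + 1) = a + n + 1 := by ring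
    push_cast
    rw [this]
    exact le_trans h1 h2

private lemma good_mul (c : ℤ → ℕ) (d ℓ : ℕ) (h : GoodSeq c d) :
    GoodSeq (fun i => ∑ m ∈ Finset.range (ℓ + 1), c (i - m)) (d + ℓ) := by
  obtain ⟨hsym, hmono⟩ := h
  have Ssym : ∀ k : ℤ, (∑ m ∈ Finset.range (ℓ + 1), c (k - m))
      = ∑ m ∈ Finset.range (ℓ + 1), c (((d : ℤ) + ℓ - k) - m) := by
    intro k
    have step1 : ∀ m : ℕ, c (((d : ℤ) + ℓ - k) - m) = c (k + m - ℓ) := by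
      intro m
      rw [hsym (((d : ℤ) + ℓ - k) - m)]
      congr 1
      ring
    have hrefl := Finset.sum_range_reflect (fun m : ℕ => c (k - m)) (ℓ + 1)
    calc (∑ m ∈ Finset.range (ℓ + 1), c (k - m))
        = ∑ m ∈ Finset.range (ℓ + 1), c (k - (ℓ + 1 - 1 - m : ℕ)) := hrefl.symm
      _ = ∑ m ∈ Finset.range (ℓ + 1), c (k + m - ℓ) := by
          refine Finset.sum_congr rfl fun m hm => ?_
          have hm' : m ≤ ℓ := by
            have := Finset.mem_range.mp hm; omega
          congr 1
          have : ((ℓ + 1 - 1 - m : ℕ) : ℤ) = (ℓ : ℤ) - m := by omega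
          rw [this]; ring
      _ = ∑ m ∈ Finset.range (ℓ + 1), c (((d : ℤ) + ℓ - k) - m) := by
          refine Finset.sum_congr rfl fun m _ => ?_
          rw [step1 m]
  constructor
  · intro k
    simp only
    rw [Ssym k]
    refine Finset.sum_congr rfl fun m _ => ?_
    congr 1
    try push_cast
    try ring
  · intro a b hab hsumle
    simp only
    push_cast at hsumle
    have hstep : ∀ i : ℤ, 2 * (i + 1) ≤ ((d + ℓ : ℕ) : ℤ) →
        (∑ m ∈ Finset.range (ℓ + 1), c (i - m)) ≤
          ∑ m ∈ Finset.range (ℓ + 1), c (i + 1 - m) := by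
      intro i hi
      push_cast at hi
      exact good_step c d ℓ ⟨hsym, hmono⟩ i (by omega)
    have hsteps := steps (fun i => ∑ m ∈ Finset.range (ℓ + 1), c (i - m)) (d + ℓ) hstep
    have main : ∀ b'' : ℤ, a ≤ b'' → 2 * b'' ≤ (d : ℤ) + ℓ →
        (∑ m ∈ Finset.range (ℓ + 1), c (a - m)) ≤
          ∑ m ∈ Finset.range (ℓ + 1), c (b'' - m) := by
      intro b'' hab'' h2
      have hn : a + ((b'' - a).toNat : ℤ) = b'' := by omega
      have := hsteps (b'' - a).toNat a (by push_cast; omega)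
      rwa [hn] at this
    rcases le_total b ((d : ℤ) + ℓ - b) with hc1 | hc1
    · exact main b hab (by omega)
    · rw [Ssym b]
      refine le_trans (main ((d : ℤ) + ℓ - b) (by omega) (by omega)) ?_
      refine le_of_eq (Finset.sum_congr rfl fun m _ => ?_)
      congr 1
      try ring

private lemma good_prod (n : ℕ) (ℓ : Fin n → ℕ) :
    GoodSeq (ceN (∏ i, ∑ j ∈ Finset.range (ℓ i + 1), (X : Polynomial ℕ) ^ j)) (∑ i, ℓ i) := by
  induction n with
  | zero =>
    simp only [Finset.univ_eq_empty, Finset.prod_empty, Finset.sum_empty]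
    constructor
    · intro k
      unfold ceN
      simp only [Polynomial.coeff_one, Nat.cast_zero]
      split_ifs <;> omega
    · intro a b hab hsum
      unfold ceN
      simp only [Polynomial.coeff_one, Nat.cast_zero] at hsum ⊢
      split_ifs <;> omega
  | succ n ih =>
    rw [Fin.prod_univ_castSucc, Fin.sum_univ_castSucc]
    have hgood := good_mul _ (∑ i : Fin n, ℓ i.castSucc) (ℓ (Fin.last n))
      (ih (fun i => ℓ i.castSucc))
    have heq : ceN ((∏ i : Fin n, ∑ j ∈ Finset.range (ℓ i.castSucc + 1),
        (X : Polynomial ℕ) ^ j) * ∑ j ∈ Finset.range (ℓ (Fin.last n) + 1),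
        (X : Polynomial ℕ) ^ j)
        = fun i => ∑ m ∈ Finset.range (ℓ (Fin.last n) + 1),
            ceN (∏ i : Fin n, ∑ j ∈ Finset.range (ℓ i.castSucc + 1),
              (X : Polynomial ℕ) ^ j) (i - m) :=
      funext (ceN_mul_geom _ _)
    rw [heq]
    exact hgood

theorem split_decomposition_shape (n : ℕ) (ℓ : Fin n → ℕ) (hℓ : ∀ i, 0 < ℓ i)
    (d : ℕ) (hd : d = ∑ i, ℓ i)
    (g : Polynomial ℕ)
    (hg : g = ∏ i : Fin n, ∑ j ∈ Finset.range (ℓ i + 1), (X : Polynomial ℕ) ^ j) :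
    g.coeff 0 = 1 ∧ g.coeff d = 1 ∧
      (∀ i ≤ d, g.coeff i = g.coeff (d - i)) ∧
      (∀ i j, i ≤ j → j ≤ d / 2 → g.coeff i ≤ g.coeff j) := by
  subst hd hg
  have hgood := good_prod n ℓ
  have hcoe : ∀ k : ℕ, ceN (∏ i : Fin n, ∑ j ∈ Finset.range (ℓ i + 1),
      (X : Polynomial ℕ) ^ j) (k : ℤ)
      = (∏ i : Fin n, ∑ j ∈ Finset.range (ℓ i + 1), (X : Polynomial ℕ) ^ j).coeff k := by
    intro k
    unfold ceN
    rw [if_pos (by positivity), Int.toNat_natCast]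
  set g := ∏ i : Fin n, ∑ j ∈ Finset.range (ℓ i + 1), (X : Polynomial ℕ) ^ j with hgdef
  set d := ∑ i, ℓ i with hddef
  have hc0 : g.coeff 0 = 1 := by
    rw [Polynomial.coeff_zero_eq_eval_zero, hgdef, Polynomial.eval_prod]
    refine Finset.prod_eq_one fun i _ => ?_
    rw [Polynomial.eval_finset_sum, Finset.sum_range_succ']
    simp
  have hsymm : ∀ i : ℕ, i ≤ d → g.coeff i = g.coeff (d - i) := by
    intro i hi
    have := hgood.1 (i : ℤ)
    rw [hcoe i] at this
    have hcast : (d : ℤ) - i = ((d - i : ℕ) : ℤ) := by omega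
    rw [hcast, hcoe (d - i)] at this
    exact this
  refine ⟨hc0, ?_, hsymm, ?_⟩
  · have := hsymm d le_rfl
    simpa [hc0] using this
  · intro i j hij hj
    have := hgood.2 (i : ℤ) (j : ℤ) (by exact_mod_cast hij) (by
      have : i + j ≤ d := by omega
      exact_mod_cast this)
    rw [hcoe i, hcoe j] at this
    exact this
end

section
/- Let q ∈ ℂ be nonzero and not a root of unity, and ℓ, ℓ' positive integers with nonzero a, a' ∈ ℂ. If S(ℓ,a) ∪ S(ℓ',a') = S(ℓ'',a'') for some ℓ'' > max{ℓ,ℓ'} and nonzero a'' (as sets), then ℓ ≤ ℓ'' ≤ ℓ + ℓ' and S(ℓ,a) ∩ S(ℓ',a') is either empty or itself a q-string S(m,b) with m = ℓ + ℓ' − ℓ''. -/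
/-- A set of complex numbers is a q-string if it is S(m,b) for some m > 0, b ≠ 0. -/
def IsQString (q : ℂ) (S : Set ℂ) : Prop :=
  ∃ m b, 0 < m ∧ b ≠ 0 ∧ S = qStr q b m

lemma myZpowInj (q : ℂ) (hq0 : q ≠ 0) (hq : ∀ n : ℕ, 0 < n → q ^ n ≠ 1)
    {m n : ℤ} (h : q ^ m = q ^ n) : m = n := by
  have key : ∀ d : ℤ, q ^ d = 1 → d = 0 := by
    intro d hd
    by_contra hne
    rcases lt_or_gt_of_ne hne with hlt | hgt
    · have h1 : q ^ (-d).toNat = 1 := by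
        rw [← zpow_natCast, Int.toNat_of_nonneg (by omega), zpow_neg, hd, inv_one]
      exact hq (-d).toNat (by omega) h1
    · have h1 : q ^ d.toNat = 1 := by
        rw [← zpow_natCast, Int.toNat_of_nonneg (by omega)]; exact hd
      exact hq d.toNat (by omega) h1
  have h1 : q ^ (m - n) = 1 := by
    rw [zpow_sub₀ hq0, h, div_self (zpow_ne_zero _ hq0)]
  have := key _ h1
  omega

lemma shift_base (q A B : ℂ) (hq0 : q ≠ 0) {s t : ℤ} (h : A * q ^ s = B * q ^ t) :
    A = B * q ^ (t - s) := by
  calc A = A * q ^ s * q ^ (-s) := by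
        rw [mul_assoc, ← zpow_add₀ hq0, add_neg_cancel, zpow_zero, mul_one]
    _ = B * q ^ t * q ^ (-s) := by rw [h]
    _ = B * q ^ (t - s) := by rw [mul_assoc, ← zpow_add₀ hq0, ← sub_eq_add_neg]

lemma qStr_as_f (q c C : ℂ) (hq0 : q ≠ 0) (m n : ℕ) (x : ℤ)
    (hc : c = C * q ^ (2 * x - (n : ℤ) + m)) :
    qStr q c m = (fun j : ℤ => C * q ^ (2 * j - (n : ℤ) + 1)) '' Set.Ico x (x + m) := by
  ext z
  simp only [qStr, Set.mem_image, Set.mem_Iio, Set.mem_Ico]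
  constructor
  · rintro ⟨i, hi, rfl⟩
    refine ⟨x + i, ⟨by omega, by omega⟩, ?_⟩
    rw [hc, mul_assoc, ← zpow_add₀ hq0]
    congr 1
    congr 1
    push_cast
    ring
  · rintro ⟨j, ⟨hj1, hj2⟩, rfl⟩
    refine ⟨(j - x).toNat, by omega, ?_⟩
    rw [hc, mul_assoc, ← zpow_add₀ hq0]
    congr 1
    congr 1
    omega

lemma exists_offset (q c C : ℂ) (hq0 : q ≠ 0) (m n : ℕ) (hm : 0 < m)
    (hsub : qStr q c m ⊆ qStr q C n) :
    ∃ x : ℤ, qStr q c m = (fun j : ℤ => C * q ^ (2 * j - (n : ℤ) + 1)) '' Set.Ico x (x + m) := by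
  have hmem : c * q ^ (2 * ((0 : ℕ) : ℤ) - (m : ℤ) + 1) ∈ qStr q c m :=
    Set.mem_image_of_mem _ (show (0 : ℕ) ∈ Set.Iio m from hm)
  obtain ⟨i₀, hi₀, heq⟩ := hsub hmem
  have heq' : C * q ^ (2 * (i₀ : ℤ) - (n : ℤ) + 1) = c * q ^ (2 * ((0 : ℕ) : ℤ) - (m : ℤ) + 1) := heq
  have h1 := shift_base q c C hq0 heq'.symm
  refine ⟨(i₀ : ℤ), qStr_as_f q c C hq0 m n i₀ ?_⟩
  rw [h1]
  congr 1
  push_cast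
  ring

lemma Ico_lemma (x y n L L' : ℤ) (hL : 0 < L) (hL' : 0 < L') (hn : L < n) (hn' : L' < n)
    (h : Set.Ico x (x + L) ∪ Set.Ico y (y + L') = Set.Ico 0 n) :
    L ≤ n ∧ n ≤ L + L' ∧
      (Set.Ico x (x + L) ∩ Set.Ico y (y + L') = ∅ ∨
        ∃ m : ℤ, Set.Ico x (x + L) ∩ Set.Ico y (y + L') = Set.Ico m (m + (L + L' - n))) := by
  have key : ∀ z : ℤ, ((x ≤ z ∧ z < x + L) ∨ (y ≤ z ∧ z < y + L')) ↔ (0 ≤ z ∧ z < n) := by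
    intro z
    have h' := Set.ext_iff.mp h z
    simpa [Set.mem_Ico, Set.mem_union] using h'
  have k1 := key x
  have k2 := key (x + L - 1)
  have k3 := key y
  have k4 := key (y + L' - 1)
  have k5 := key 0
  have k6 := key (n - 1)
  have k7 := key (x + L)
  have k8 := key (y + L')
  refine ⟨by omega, by omega, ?_⟩
  have H : (x = 0 ∧ y + L' = n ∧ x + L ≤ y + L' ∧ x ≤ y) ∨
      (y = 0 ∧ x + L = n ∧ y + L' ≤ x + L ∧ y ≤ x) := by omega
  rcases H with ⟨hx0, hyn, hle, hxy⟩ | ⟨hy0, hxn, hle, hxy⟩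
  · by_cases hE : x + L ≤ y
    · left
      rw [Set.eq_empty_iff_forall_notMem]
      intro z hz
      simp only [Set.mem_inter_iff, Set.mem_Ico] at hz
      omega
    · right
      refine ⟨y, ?_⟩
      ext z
      simp only [Set.mem_inter_iff, Set.mem_Ico]
      have k9 := key z
      omega
  · by_cases hE : y + L' ≤ x
    · left
      rw [Set.eq_empty_iff_forall_notMem]
      intro z hz
      simp only [Set.mem_inter_iff, Set.mem_Ico] at hz
      omega
    · right
      refine ⟨x, ?_⟩
      ext z
      simp only [Set.mem_inter_iff, Set.mem_Ico]
      have k9 := key z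
      omega

theorem qstring_union_intersection (q a a' a'' : ℂ) (ℓ ℓ' ℓ'' : ℕ)
    (hq0 : q ≠ 0) (hq : ∀ n : ℕ, 0 < n → q ^ n ≠ 1)
    (ha : a ≠ 0) (ha' : a' ≠ 0) (ha'' : a'' ≠ 0)
    (hℓ : 0 < ℓ) (hℓ' : 0 < ℓ') (hgt : max ℓ ℓ' < ℓ'')
    (hunion : qStr q a ℓ ∪ qStr q a' ℓ' = qStr q a'' ℓ'') :
    ℓ ≤ ℓ'' ∧ ℓ'' ≤ ℓ + ℓ' ∧
      (qStr q a ℓ ∩ qStr q a' ℓ' = ∅ ∨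
        ∃ b : ℂ, b ≠ 0 ∧ qStr q a ℓ ∩ qStr q a' ℓ' = qStr q b (ℓ + ℓ' - ℓ'')) := by
  have hf : Function.Injective (fun j : ℤ => a'' * q ^ (2 * j - (ℓ'' : ℤ) + 1)) := by
    intro j k hjk
    simp only at hjk
    have h2 := mul_left_cancel₀ ha'' hjk
    have h3 := myZpowInj q hq0 hq h2
    omega
  obtain ⟨x, hA⟩ := exists_offset q a a'' hq0 ℓ ℓ'' hℓ (hunion ▸ Set.subset_union_left)
  obtain ⟨y, hB⟩ := exists_offset q a' a'' hq0 ℓ' ℓ'' hℓ' (hunion ▸ Set.subset_union_right)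
  have hC : qStr q a'' ℓ'' =
      (fun j : ℤ => a'' * q ^ (2 * j - (ℓ'' : ℤ) + 1)) '' Set.Ico 0 (0 + ℓ'') :=
    qStr_as_f q a'' a'' hq0 ℓ'' ℓ'' 0
      (by rw [show 2 * (0 : ℤ) - (ℓ'' : ℤ) + (ℓ'' : ℕ) = 0 by push_cast; ring, zpow_zero, mul_one])
  have hun : Set.Ico x (x + ℓ) ∪ Set.Ico y (y + ℓ') = Set.Ico (0 : ℤ) (0 + ℓ'') := by
    apply (Set.image_eq_image hf).mp
    rw [Set.image_union, ← hA, ← hB, ← hC, hunion]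
  rw [show (0 : ℤ) + (ℓ'' : ℤ) = (ℓ'' : ℤ) by ring] at hun
  obtain ⟨g1, g2, g3⟩ := Ico_lemma x y ℓ'' ℓ ℓ' (by exact_mod_cast hℓ) (by exact_mod_cast hℓ')
    (by exact_mod_cast lt_of_le_of_lt (le_max_left ℓ ℓ') hgt)
    (by exact_mod_cast lt_of_le_of_lt (le_max_right ℓ ℓ') hgt) hun
  refine ⟨by exact_mod_cast g1, by exact_mod_cast g2, ?_⟩
  rcases g3 with hemp | ⟨m, hm⟩
  · left
    rw [hA, hB, ← Set.image_inter hf, hemp, Set.image_empty]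
  · right
    refine ⟨a'' * q ^ (2 * m - (ℓ'' : ℤ) + ((ℓ + ℓ' - ℓ'' : ℕ) : ℤ)),
      mul_ne_zero ha'' (zpow_ne_zero _ hq0), ?_⟩
    rw [hA, hB, ← Set.image_inter hf, hm,
      show (ℓ : ℤ) + (ℓ' : ℤ) - (ℓ'' : ℤ) = ((ℓ + ℓ' - ℓ'' : ℕ) : ℤ) by omega]
    exact (qStr_as_f q _ a'' hq0 (ℓ + ℓ' - ℓ'') ℓ'' m rfl).symm
end
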